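/- arXiv:2512.14852 — 2 statements merged into one kernel-verified Lean document; each statement's English description precedes it below -/
import Mathlib

section
/- A finite-dimensional G-graded K-algebra A is graded symmetric (i.e., A* ≅ A as graded A-bimodules) if and only if there exists a family of scalars α = (α_ℓ)_{ℓ∈J_ε} such that the ε-paratrophic matrix P(ε,α) is both symmetric and invertible. -/
/-!
A bimodule map `φ : A → A*` is determined by the linear form `l = φ 1`, via `φ x y = l (x * y)`;
linearity on both sides forces `l (x * y) = l (y * x)`, bijectivity of `φ` is nondegeneracy of
the form `(x, y) ↦ l (x * y)`, and `φ` is graded exactly when `l` vanishes off the neutral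
component. Such an `l` is determined by the scalars `α ℓ = l (e ℓ)` with `deg ℓ = ε`, and the Gram
matrix of `(x, y) ↦ l (x * y)` in the basis `e` is `P(ε, α)`; so symmetry and nondegeneracy of the
form are symmetry and invertibility of `P(ε, α)`.
-/

open Finset Module

open LinearMap (BilinForm)

noncomputable section

section Semiring

variable {K A : Type*} [CommSemiring K] [Semiring A] [Algebra K A]

def mulForm (l : Dual K A) : BilinForm K A :=
  (LinearMap.mul K A).compr₂ l

@[simp]
lemma mulForm_apply (l : Dual K A) (x y : A) : mulForm l x y = l (x * y) := rfl

lemma mulForm_isSymm_iff {l : Dual K A} :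
    (mulForm l).IsSymm ↔ ∀ x y : A, l (x * y) = l (y * x) :=
  LinearMap.BilinForm.isSymm_def

lemma eq_mulForm_of_map_mul_right {φ : A →ₗ[K] Dual K A}
    (hφ : ∀ a x y : A, φ (x * a) y = φ x (a * y)) : φ = mulForm (φ 1) := by
  ext x y
  simpa using hφ x 1 y

lemma mulForm_isSymm_of_bimodule {φ : A →ₗ[K] Dual K A}
    (hφl : ∀ a x y : A, φ (a * x) y = φ x (y * a))
    (hφr : ∀ a x y : A, φ (x * a) y = φ x (a * y)) : (mulForm (φ 1)).IsSymm := by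
  refine mulForm_isSymm_iff.2 fun x y => ?_
  have hl := hφl x 1 y
  have hr := hφr x 1 y
  simp only [mul_one, one_mul] at hl hr
  rw [← hr, hl]

variable {G : Type*} [Group G] {𝒜 : G → Submodule K A}

lemma mulForm_eq_zero_of_mem_of_ne_inv {l : Dual K A}
    (hl : ∀ g : G, g ≠ 1 → ∀ x ∈ 𝒜 g, l x = 0)
    (h_mul : ∀ {g h : G} {a b : A}, a ∈ 𝒜 g → b ∈ 𝒜 h → a * b ∈ 𝒜 (g * h))
    {g h : G} (hgh : h ≠ g⁻¹) {x y : A} (hx : x ∈ 𝒜 g) (hy : y ∈ 𝒜 h) : mulForm l x y = 0 :=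
  hl (g * h) (fun h1 => hgh (mul_eq_one_iff_inv_eq.1 h1).symm) (x * y) (h_mul hx hy)

lemma forall_mem_eq_zero_iff_forall_basis {J : Type*} {e : Basis J K A} {deg : J → G}
    (h𝒜 : ∀ g : G, 𝒜 g = Submodule.span K (e '' {i | deg i = g})) {l : Dual K A} :
    (∀ g : G, g ≠ 1 → ∀ x ∈ 𝒜 g, l x = 0) ↔ ∀ ℓ, deg ℓ ≠ 1 → l (e ℓ) = 0 := by
  refine ⟨fun hl ℓ hℓ => hl (deg ℓ) hℓ (e ℓ) ?_, fun hl g hg x hx => ?_⟩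
  · rw [h𝒜]
    exact Submodule.subset_span ⟨ℓ, rfl, rfl⟩
  · have hspan : Submodule.span K (e '' {i | deg i = g}) ≤ LinearMap.ker l :=
      Submodule.span_le.2 <| by
        rintro _ ⟨i, hi, rfl⟩
        exact hl i fun h => hg (hi ▸ h)
    exact hspan (h𝒜 g ▸ hx)

variable {J : Type*} [Fintype J] [DecidableEq G]

def paratrophicMatrix (deg : J → G) (c : J → J → J → K) (α : J → K) : Matrix J J K :=
  Matrix.of fun i j => ∑ ℓ ∈ univ.filter (fun ℓ => deg ℓ = 1), α ℓ * c i j ℓ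

variable (e : Basis J K A) (deg : J → G)

def paratrophicForm (α : J → K) : Dual K A :=
  ∑ ℓ ∈ univ.filter (fun ℓ => deg ℓ = 1), α ℓ • e.coord ℓ

lemma paratrophicForm_apply_basis (α : J → K) (i : J) :
    paratrophicForm e deg α (e i) = if deg i = 1 then α i else 0 := by
  classical
  simp [paratrophicForm, Finsupp.single_apply]

lemma paratrophicMatrix_congr {c : J → J → J → K} {α β : J → K}
    (h : ∀ ℓ, deg ℓ = 1 → α ℓ = β ℓ) : paratrophicMatrix deg c α = paratrophicMatrix deg c β := by
  ext i j
  exact sum_congr rfl fun ℓ hℓ => by rw [h ℓ (mem_filter.1 hℓ).2]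

variable {e deg}

lemma toMatrix_mulForm [DecidableEq J] {c : J → J → J → K}
    (hc : ∀ i j ℓ, c i j ℓ = e.repr (e i * e j) ℓ) {l : Dual K A}
    (hl : ∀ ℓ, deg ℓ ≠ 1 → l (e ℓ) = 0) :
    LinearMap.BilinForm.toMatrix e (mulForm l) = paratrophicMatrix deg c (fun ℓ => l (e ℓ)) := by
  ext i j
  rw [LinearMap.BilinForm.toMatrix_apply, mulForm_apply, paratrophicMatrix, Matrix.of_apply,
    sum_filter, ← e.sum_repr (e i * e j), map_sum]
  refine sum_congr rfl fun ℓ _ => ?_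
  by_cases hℓ : deg ℓ = 1
  · simp [hℓ, hc, mul_comm]
  · simp [hℓ, hl ℓ hℓ]

end Semiring

section Field

variable {K A : Type*} [Field K] [Ring A] [Algebra K A]

lemma nondegenerate_mulForm_of_injective [FiniteDimensional K A] {φ : A →ₗ[K] Dual K A}
    (hφ : ∀ a x y : A, φ (x * a) y = φ x (a * y)) (hinj : Function.Injective φ) :
    (mulForm (φ 1)).Nondegenerate := by
  rw [LinearMap.BilinForm.nondegenerate_iff_ker_eq_bot, ← eq_mulForm_of_map_mul_right hφ]
  exact LinearMap.ker_eq_bot.2 hinj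

lemma isUnit_toMatrix_iff_nondegenerate {J : Type*} [Fintype J] [DecidableEq J]
    (e : Basis J K A) {B : BilinForm K A} :
    IsUnit (LinearMap.BilinForm.toMatrix e B) ↔ B.Nondegenerate := by
  rw [Matrix.isUnit_iff_isUnit_det, isUnit_iff_ne_zero,
    LinearMap.BilinForm.nondegenerate_iff_det_ne_zero e]

variable {G : Type*} [Group G] {𝒜 : G → Submodule K A}

theorem exists_gradedBimoduleEquivDual_iff_exists_form [FiniteDimensional K A]
    (h_one : (1 : A) ∈ 𝒜 1)
    (h_mul : ∀ {g h : G} {a b : A}, a ∈ 𝒜 g → b ∈ 𝒜 h → a * b ∈ 𝒜 (g * h)) :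
    (∃ φ : A ≃ₗ[K] Dual K A,
        (∀ a x y : A, φ (a * x) y = φ x (y * a)) ∧
        (∀ a x y : A, φ (x * a) y = φ x (a * y)) ∧
        (∀ g : G, ∀ x ∈ 𝒜 g, ∀ h : G, h ≠ g⁻¹ → ∀ y ∈ 𝒜 h, φ x y = 0)) ↔
    ∃ l : Dual K A, (mulForm l).IsSymm ∧ (mulForm l).Nondegenerate ∧
      ∀ g : G, g ≠ 1 → ∀ x ∈ 𝒜 g, l x = 0 := by
  constructor
  · rintro ⟨φ, hφl, hφr, hφ𝒜⟩
    refine ⟨φ 1, mulForm_isSymm_of_bimodule (φ := φ.toLinearMap) hφl hφr,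
      nondegenerate_mulForm_of_injective (φ := φ.toLinearMap) hφr φ.injective, ?_⟩
    exact fun g hg => hφ𝒜 1 1 h_one g (by rwa [inv_one])
  · rintro ⟨l, hsymm, hnd, hl⟩
    have hcomm := mulForm_isSymm_iff.1 hsymm
    refine ⟨(mulForm l).toDual hnd, fun a x y => ?_, fun a x y => ?_,
      fun g x hx h hgh y hy => ?_⟩
    · simp only [LinearMap.BilinForm.toDual_def, mulForm_apply]
      rw [mul_assoc, hcomm, mul_assoc]
    · simp only [LinearMap.BilinForm.toDual_def, mulForm_apply, mul_assoc]
    · rw [LinearMap.BilinForm.toDual_def]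
      exact mulForm_eq_zero_of_mem_of_ne_inv hl h_mul hgh hx hy

theorem exists_form_iff_exists_paratrophicMatrix [DecidableEq G] {J : Type*} [Fintype J]
    [DecidableEq J] {e : Basis J K A} {deg : J → G}
    (h𝒜 : ∀ g : G, 𝒜 g = Submodule.span K (e '' {i | deg i = g}))
    {c : J → J → J → K} (hc : ∀ i j ℓ, c i j ℓ = e.repr (e i * e j) ℓ) :
    (∃ l : Dual K A, (mulForm l).IsSymm ∧ (mulForm l).Nondegenerate ∧
      ∀ g : G, g ≠ 1 → ∀ x ∈ 𝒜 g, l x = 0) ↔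
    ∃ α : J → K, (paratrophicMatrix deg c α).IsSymm ∧ IsUnit (paratrophicMatrix deg c α) := by
  constructor
  · rintro ⟨l, hsymm, hnd, hl⟩
    rw [forall_mem_eq_zero_iff_forall_basis h𝒜] at hl
    refine ⟨fun ℓ => l (e ℓ), ?_, ?_⟩
    · rwa [← toMatrix_mulForm hc hl, LinearMap.BilinForm.isSymm_toMatrix_iff_isSymm]
    · rwa [← toMatrix_mulForm hc hl, isUnit_toMatrix_iff_nondegenerate]
  · rintro ⟨α, hsymm, hunit⟩
    have hl : ∀ ℓ, deg ℓ ≠ 1 → paratrophicForm e deg α (e ℓ) = 0 := fun ℓ hℓ => by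
      rw [paratrophicForm_apply_basis, if_neg hℓ]
    have hP : LinearMap.BilinForm.toMatrix e (mulForm (paratrophicForm e deg α)) =
        paratrophicMatrix deg c α := by
      rw [toMatrix_mulForm hc hl]
      exact paratrophicMatrix_congr deg fun ℓ hℓ => by rw [paratrophicForm_apply_basis, if_pos hℓ]
    refine ⟨paratrophicForm e deg α, ?_, ?_, (forall_mem_eq_zero_iff_forall_basis h𝒜).2 hl⟩
    · rwa [← LinearMap.BilinForm.isSymm_toMatrix_iff_isSymm e, hP]
    · rwa [← isUnit_toMatrix_iff_nondegenerate e, hP]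

end Field

end

/-- **Proposition B'.**  A finite-dimensional `G`-graded algebra `A` is graded symmetric
(`A* ≅ A` as graded `A`-bimodules, unfolded: there is a `K`-linear equivalence
`φ : A ≃ A*` with `φ(a·x)(y) = φ(x)(y·a)`, `φ(x·a)(y) = φ(x)(a·y)`, mapping `𝒜 g` into
`(A*)_g`) if and only if there is a family of scalars `α` indexed by `J_ε` such that the
ε-paratrophic matrix `P(ε,α)` is symmetric and invertible. -/
theorem stmt5 (K : Type) [Field K] (G : Type) [Group G] [DecidableEq G]
    (A : Type) [Ring A] [Algebra K A] (𝒜 : G → Submodule K A)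
    (h_one : (1 : A) ∈ 𝒜 1)
    (h_mul : ∀ {g h : G} {a b : A}, a ∈ 𝒜 g → b ∈ 𝒜 h → a * b ∈ 𝒜 (g * h))
    (J : Type) [Fintype J] [DecidableEq J]
    (deg : J → G) (e : Module.Basis J K A)
    (h𝒜 : ∀ g : G, 𝒜 g = Submodule.span K (e '' {i | deg i = g}))
    (c : J → J → J → K) (hc : ∀ i j ℓ, c i j ℓ = e.repr (e i * e j) ℓ) :
    (∃ φ : A ≃ₗ[K] Module.Dual K A,
        (∀ a x y : A, φ (a * x) y = φ x (y * a)) ∧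
        (∀ a x y : A, φ (x * a) y = φ x (a * y)) ∧
        (∀ g : G, ∀ x ∈ 𝒜 g, ∀ h : G, h ≠ g⁻¹ → ∀ y ∈ 𝒜 h, φ x y = 0)) ↔
    (∃ α : J → K,
        (Matrix.of fun i j : J =>
            ∑ ℓ ∈ univ.filter (fun ℓ => deg ℓ = (1 : G)), α ℓ * c i j ℓ).IsSymm ∧
        IsUnit (Matrix.of fun i j : J =>
            ∑ ℓ ∈ univ.filter (fun ℓ => deg ℓ = (1 : G)), α ℓ * c i j ℓ)) := by
  have : FiniteDimensional K A := .of_basis e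
  exact (exists_gradedBimoduleEquivDual_iff_exists_form h_one h_mul).trans
    (exists_form_iff_exists_paratrophicMatrix h𝒜 hc)
end

section
/- The algebra A(q), regarded with its Z-grading in which each x_i has degree 1, is n-graded Frobenius, and it is not j-graded Frobenius for any integer j ≠ n. -/
open Finset

inductive AqRel (K : Type) [Field K] (n : ℕ) (q : Fin n → Fin n → K) :
    FreeAlgebra K (Fin n) → FreeAlgebra K (Fin n) → Prop
  | comm : ∀ i j : Fin n, i < j →
      AqRel K n q (FreeAlgebra.ι K j * FreeAlgebra.ι K i)
        (q i j • (FreeAlgebra.ι K i * FreeAlgebra.ι K j))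
  | sq : ∀ i : Fin n, AqRel K n q (FreeAlgebra.ι K i * FreeAlgebra.ι K i) 0

abbrev Aq (K : Type) [Field K] (n : ℕ) (q : Fin n → Fin n → K) : Type :=
  RingQuot (AqRel K n q)

noncomputable def xq (K : Type) [Field K] (n : ℕ) (q : Fin n → Fin n → K) (i : Fin n) :
    Aq K n q :=
  RingQuot.mkAlgHom K (AqRel K n q) (FreeAlgebra.ι K i)

noncomputable def eq' (K : Type) [Field K] (n : ℕ) (q : Fin n → Fin n → K)
    (g : Fin n → ZMod 2) : Aq K n q :=
  ((List.finRange n).map (fun i => if g i = 1 then xq K n q i else 1)).prod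

/-- The homogeneous component of degree `d ∈ ℤ` of `A(q)` for the `ℤ`-grading in which
each `x_i` has degree `1`: the span of the monomials `e_g` with `|supp g| = d`. -/
noncomputable def AqGradeZ (K : Type) [Field K] (n : ℕ) (q : Fin n → Fin n → K)
    (d : ℤ) : Submodule K (Aq K n q) :=
  Submodule.span K
    (eq' K n q '' {g : Fin n → ZMod 2 | ((univ.filter fun i => g i = 1).card : ℤ) = d})

/-- `A(q)` is `σ`-graded Frobenius for the `ℤ`-grading, unfolded. -/
def AqZFrobenius (K : Type) [Field K] (n : ℕ) (q : Fin n → Fin n → K) (σ : ℤ) : Prop :=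
  ∃ φ : Aq K n q ≃ₗ[K] Module.Dual K (Aq K n q),
    (∀ a x y : Aq K n q, φ (a * x) y = φ x (y * a)) ∧
    (∀ d : ℤ, ∀ x ∈ AqGradeZ K n q (d + σ),
      ∀ h : ℤ, h ≠ -d → ∀ y ∈ AqGradeZ K n q h, φ x y = 0)

/-!
The ordered monomials `e_S = x_{s₁} ⋯ x_{s_k}` (`s₁ < ⋯ < s_k`) satisfy `x_i e_S = 0` for `i ∈ S`
and `x_i e_S = c • e_{S ∪ {i}}` otherwise, `c` being a product of `q`'s; so `e_T e_S = 0` unless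
`T` and `S` are disjoint, in which case it is `c_{T,S} • e_{T ∪ S}` with `c_{T,S}` again a product
of `q`'s. Hence the `e_S` span, and they are linearly independent because the same formulas define an action of `A(q)` on
`Finset (Fin n) → K` (a `q`-deformed fermionic Fock space) in which `e_S` sends `δ_∅` to `δ_S`.

The coordinate `λ` of the top monomial (degree `n`) is a Frobenius form: `λ(e_{Sᶜ} e_T) ≠ 0` iff
`T = S`, so `x ↦ λ(· * x)` is an isomorphism `A ≅ A*`, and `λ(e_T e_S) = 0` unless
`|T| + |S| = n`, which is the shift by `n`. Conversely, a `σ`-graded Frobenius isomorphism pairs a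
nonzero element of degree `e` nontrivially with some monomial of degree `σ - e`; since all degrees
lie in `[0, n]`, taking `e = 0` and `e = n` gives `σ ≤ n ≤ σ`.
-/

lemma List.prod_map_ite_one {α M : Type*} [Monoid M] (p : α → Prop) [DecidablePred p]
    (f : α → M) (l : List α) :
    (l.map fun a => if p a then f a else 1).prod = ((l.filter p).map f).prod := by
  induction l with
  | nil => rfl
  | cons a l ih => by_cases h : p a <;> simp [h, ih]

lemma LinearMap.apply_eq_zero_of_mem_span {R M N P : Type*} [CommSemiring R] [AddCommMonoid M]
    [AddCommMonoid N] [AddCommMonoid P] [Module R M] [Module R N] [Module R P]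
    (B : M →ₗ[R] N →ₗ[R] P) {s : Set M} {t : Set N} (h : ∀ x ∈ s, ∀ y ∈ t, B x y = 0)
    {x : M} {y : N} (hx : x ∈ Submodule.span R s) (hy : y ∈ Submodule.span R t) : B x y = 0 :=
  LinearMap.eqOn_span (f := B.flip y) (g := 0)
    (fun x' hx' => LinearMap.eqOn_span (f := B x') (g := 0) (h x' hx') hy) hx

namespace Aq

variable {K : Type} [Field K] {n : ℕ} {q : Fin n → Fin n → K}

variable (q) in
def qFactor (S : Finset (Fin n)) (i : Fin n) : K := ∏ k ∈ S with k < i, q k i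

lemma qFactor_eq_one {S : Finset (Fin n)} {i : Fin n} (h : ∀ j ∈ S, i ≤ j) :
    qFactor q S i = 1 := by
  rw [qFactor, filter_false_of_mem fun j hj => not_lt.2 (h j hj), prod_empty]

lemma qFactor_insert {S : Finset (Fin n)} {a i : Fin n} (ha : a ∉ S) (hai : a < i) :
    qFactor q (insert a S) i = q a i * qFactor q S i := by
  rw [qFactor, filter_insert, if_pos hai, prod_insert fun h => ha (mem_filter.1 h).1, qFactor]

lemma qFactor_of_mem {S : Finset (Fin n)} {a i : Fin n} (ha : a ∈ S) (hai : a < i) :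
    qFactor q S i = q a i * qFactor q (S.erase a) i := by
  rw [← qFactor_insert (notMem_erase a S) hai, insert_erase ha]

lemma qFactor_union_of_lt {T S : Finset (Fin n)} {i : Fin n} (h : ∀ j ∈ T, i < j) :
    qFactor q (T ∪ S) i = qFactor q S i := by
  rw [qFactor, filter_union, filter_false_of_mem fun j hj => not_lt.2 (h j hj).le,
    empty_union, qFactor]

lemma qFactor_erase {S : Finset (Fin n)} {i j : Fin n} (h : i ≤ j) :
    qFactor q (S.erase j) i = qFactor q S i := by
  have hj : j ∉ S.filter (· < i) := fun hj => not_lt.2 h (mem_filter.1 hj).2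
  rw [qFactor, filter_erase, erase_eq_of_notMem hj, qFactor]

variable (q) in
noncomputable def monomial (S : Finset (Fin n)) : Aq K n q := (S.sort.map (xq K n q)).prod

@[simp]
lemma monomial_empty : monomial q ∅ = 1 := by
  simp [monomial]

@[simp]
lemma monomial_singleton (i : Fin n) : monomial q {i} = xq K n q i := by
  simp [monomial]

lemma monomial_insert_of_lt {a : Fin n} {S : Finset (Fin n)} (h : ∀ j ∈ S, a < j) :
    monomial q (insert a S) = xq K n q a * monomial q S := by
  rw [monomial, sort_insert _ (fun j hj => (h j hj).le) fun ha => lt_irrefl a (h a ha),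
    List.map_cons, List.prod_cons, monomial]

lemma eq'_eq_monomial (g : Fin n → ZMod 2) : eq' K n q g = monomial q {i | g i = 1} := by
  have hsort := (List.toFinset_sort (· ≤ ·) ((List.nodup_finRange n).filter (g · = 1))).2
    ((List.pairwise_le_finRange n).filter _)
  simp only [List.toFinset_filter, List.toFinset_finRange, decide_eq_true_eq] at hsort
  rw [eq', List.prod_map_ite_one, monomial, hsort]

lemma xq_mul_self (i : Fin n) : xq K n q i * xq K n q i = 0 := by
  simpa [xq] using RingQuot.mkAlgHom_rel K (AqRel.sq (q := q) i)

lemma xq_mul_xq_of_lt {i j : Fin n} (hij : i < j) :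
    xq K n q j * xq K n q i = q i j • (xq K n q i * xq K n q j) := by
  simpa [xq] using RingQuot.mkAlgHom_rel K (AqRel.comm (q := q) i j hij)

lemma xq_mul_monomial (i : Fin n) (S : Finset (Fin n)) :
    xq K n q i * monomial q S =
      if i ∈ S then 0 else qFactor q S i • monomial q (insert i S) := by
  induction S using Finset.induction_on_min with
  | empty => simp [qFactor]
  | insert a s has ih =>
    have ha : a ∉ s := fun h => lt_irrefl a (has a h)
    rw [monomial_insert_of_lt has]
    rcases lt_trichotomy i a with hia | rfl | hai
    · have hi : ∀ j ∈ insert a s, i < j := by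
        simpa using ⟨hia, fun j hj => hia.trans (has j hj)⟩
      rw [← monomial_insert_of_lt has, ← monomial_insert_of_lt hi,
        if_neg fun h => lt_irrefl i (hi i h), qFactor_eq_one fun j hj => (hi j hj).le, one_smul]
    · rw [← mul_assoc, xq_mul_self, zero_mul, if_pos (mem_insert_self _ _)]
    · rw [← mul_assoc, xq_mul_xq_of_lt hai, smul_mul_assoc, mul_assoc, ih]
      by_cases his : i ∈ s
      · simp [his]
      · have has' : ∀ j ∈ insert i s, a < j := by simpa using ⟨hai, has⟩
        rw [if_neg his, if_neg (by simp [hai.ne', his]), mul_smul_comm,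
          ← monomial_insert_of_lt has', smul_smul, qFactor_insert ha hai, insert_comm]

lemma monomial_mul_monomial (T S : Finset (Fin n)) :
    monomial q T * monomial q S =
      if Disjoint T S then (∏ i ∈ T, qFactor q S i) • monomial q (T ∪ S) else 0 := by
  induction T using Finset.induction_on_min with
  | empty => simp
  | insert a t hat ih =>
    have ha : a ∉ t := fun h => lt_irrefl a (hat a h)
    rw [monomial_insert_of_lt hat, mul_assoc, ih, prod_insert ha]
    by_cases hts : Disjoint t S
    · by_cases haS : a ∈ S
      · simp [hts, haS, xq_mul_monomial]
      · rw [if_pos hts, if_pos (disjoint_insert_left.2 ⟨haS, hts⟩), mul_smul_comm, xq_mul_monomial,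
          if_neg (by simp [ha, haS]), qFactor_union_of_lt hat, smul_smul, insert_union, mul_comm]
    · simp [hts]

variable (q) in
noncomputable def creation (i : Fin n) : Module.End K (Finset (Fin n) → K) :=
  LinearMap.pi fun S => if i ∈ S then qFactor q S i • LinearMap.proj (S.erase i) else 0

lemma creation_apply (i : Fin n) (f : Finset (Fin n) → K) (S : Finset (Fin n)) :
    creation q i f S = if i ∈ S then qFactor q S i * f (S.erase i) else 0 := by
  by_cases h : i ∈ S <;> simp [creation, h]

lemma creation_mul_self (i : Fin n) : creation q i * creation q i = 0 := by
  refine LinearMap.ext fun f => funext fun S => ?_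
  by_cases h : i ∈ S <;> simp [creation_apply, h]

lemma creation_mul_creation_of_lt {i j : Fin n} (hij : i < j) :
    creation q j * creation q i = q i j • (creation q i * creation q j) := by
  refine LinearMap.ext fun f => funext fun S => ?_
  simp only [Module.End.mul_apply, LinearMap.smul_apply, Pi.smul_apply, smul_eq_mul,
    creation_apply]
  by_cases hi : i ∈ S <;> by_cases hj : j ∈ S <;> simp [hi, hj, hij.ne, hij.ne']
  rw [qFactor_erase hij.le, qFactor_of_mem hi hij, erase_right_comm]
  ring

lemma creation_single_of_lt {a : Fin n} {S : Finset (Fin n)} (h : ∀ j ∈ S, a < j) :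
    creation q a (Pi.single S 1) = Pi.single (insert a S) 1 := by
  have haS : a ∉ S := fun ha => lt_irrefl a (h a ha)
  ext T
  rw [creation_apply]
  by_cases haT : a ∈ T
  · simp only [if_pos haT, Pi.single_apply, erase_eq_iff_eq_insert haT haS]
    split_ifs with hT
    · rw [hT, qFactor_eq_one fun j hj => ?_, mul_one]
      rcases mem_insert.1 hj with rfl | hj
      exacts [le_rfl, (h j hj).le]
    · rw [mul_zero]
  · rw [if_neg haT, Pi.single_eq_of_ne (by rintro rfl; exact haT (mem_insert_self a S))]

variable (q) in
noncomputable def fockRep : Aq K n q →ₐ[K] Module.End K (Finset (Fin n) → K) :=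
  RingQuot.liftAlgHom K ⟨FreeAlgebra.lift K (creation q), by
    rintro _ _ (⟨i, j, hij⟩ | ⟨i⟩) <;>
      simp only [map_mul, map_smul, map_zero, FreeAlgebra.lift_ι_apply]
    exacts [creation_mul_creation_of_lt hij, creation_mul_self i]⟩

lemma fockRep_xq (i : Fin n) : fockRep q (xq K n q i) = creation q i := by
  rw [xq, fockRep, RingQuot.liftAlgHom_mkAlgHom_apply, FreeAlgebra.lift_ι_apply]

lemma fockRep_monomial_single_empty (S : Finset (Fin n)) :
    fockRep q (monomial q S) (Pi.single ∅ 1) = Pi.single S 1 := by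
  induction S using Finset.induction_on_min with
  | empty => simp
  | insert a s has ih =>
    rw [monomial_insert_of_lt has, map_mul, Module.End.mul_apply, ih, fockRep_xq,
      creation_single_of_lt has]

lemma linearIndependent_monomial : LinearIndependent K (monomial q) := by
  refine LinearIndependent.of_comp
    (LinearMap.applyₗ (Pi.single ∅ 1) ∘ₗ (fockRep q).toLinearMap) ?_
  convert (Pi.basisFun K (Finset (Fin n))).linearIndependent
  ext S : 1
  simp [fockRep_monomial_single_empty]

lemma span_monomial_eq_top : Submodule.span K (Set.range (monomial q)) = ⊤ := by
  set M := Submodule.span K (Set.range (monomial q))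
  suffices h : ∀ z : Aq K n q, ∀ y ∈ M, z * y ∈ M by
    refine eq_top_iff.2 fun z _ => ?_
    simpa using h z 1 (Submodule.subset_span ⟨∅, monomial_empty⟩)
  intro z
  obtain ⟨w, rfl⟩ := RingQuot.mkAlgHom_surjective K (AqRel K n q) z
  induction w using FreeAlgebra.induction with
  | grade0 r =>
    intro y hy
    rw [AlgHom.commutes, ← Algebra.smul_def]
    exact M.smul_mem r hy
  | grade1 i =>
    refine Submodule.span_le (p := M.comap (LinearMap.mulLeft K (xq K n q i))).2 ?_
    rintro _ ⟨S, rfl⟩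
    rw [SetLike.mem_coe, Submodule.mem_comap, LinearMap.mulLeft_apply, xq_mul_monomial]
    split_ifs
    exacts [M.zero_mem, M.smul_mem _ (Submodule.subset_span ⟨_, rfl⟩)]
  | mul a b ha hb =>
    intro y hy
    rw [map_mul, mul_assoc]
    exact ha _ (hb y hy)
  | add a b ha hb =>
    intro y hy
    rw [map_add, add_mul]
    exact M.add_mem (ha y hy) (hb y hy)

variable (q) in
noncomputable def monomialBasis : Module.Basis (Finset (Fin n)) K (Aq K n q) :=
  .mk linearIndependent_monomial span_monomial_eq_top.ge

@[simp]
lemma monomialBasis_apply (S : Finset (Fin n)) : monomialBasis q S = monomial q S :=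
  Module.Basis.mk_apply _ _ _

lemma aqGradeZ_eq_span (d : ℤ) :
    AqGradeZ K n q d = Submodule.span K (monomial q '' {S | (S.card : ℤ) = d}) := by
  rw [AqGradeZ]
  congr 1
  ext x
  simp only [Set.mem_image, Set.mem_ofPred_eq, eq'_eq_monomial]
  constructor
  · rintro ⟨g, hg, rfl⟩
    exact ⟨_, hg, rfl⟩
  · rintro ⟨S, hS, rfl⟩
    have hsupp : ({i | (if i ∈ S then 1 else 0 : ZMod 2) = 1} : Finset (Fin n)) = S := by
      ext i
      by_cases h : i ∈ S <;> simp [h]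
    exact ⟨fun i => if i ∈ S then 1 else 0, by rw [hsupp]; exact ⟨hS, rfl⟩⟩

lemma monomial_mem_aqGradeZ (S : Finset (Fin n)) : monomial q S ∈ AqGradeZ K n q S.card :=
  aqGradeZ_eq_span (q := q) _ ▸ Submodule.subset_span ⟨S, rfl, rfl⟩

instance : FiniteDimensional K (Aq K n q) := .of_basis (monomialBasis q)

variable (q) in
noncomputable def topCoord : Module.Dual K (Aq K n q) := (monomialBasis q).coord univ

lemma topCoord_monomial_mul_monomial (T S : Finset (Fin n)) :
    topCoord q (monomial q T * monomial q S) =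
      if IsCompl T S then ∏ i ∈ T, qFactor q S i else 0 := by
  have hcoord (U : Finset (Fin n)) : topCoord q (monomial q U) = if U = univ then 1 else 0 := by
    rw [topCoord, ← monomialBasis_apply, Module.Basis.coord_apply, Module.Basis.repr_self,
      Finsupp.single_apply, eq_comm]
  rw [monomial_mul_monomial]
  by_cases hd : Disjoint T S
  · simp [hd, hcoord, isCompl_iff, codisjoint_iff]
  · simp [hd, isCompl_iff]

lemma topCoord_monomial_mul_monomial_of_card_add_ne {T S : Finset (Fin n)}
    (h : T.card + S.card ≠ n) : topCoord q (monomial q T * monomial q S) = 0 := by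
  rw [topCoord_monomial_mul_monomial, if_neg]
  intro hTS
  rw [eq_compl_iff_isCompl.2 hTS, card_compl_add_card, Fintype.card_fin] at h
  exact h rfl

lemma qFactor_ne_zero (hq : ∀ i j : Fin n, i < j → q i j ≠ 0) (S : Finset (Fin n)) (i : Fin n) :
    qFactor q S i ≠ 0 :=
  prod_ne_zero_iff.2 fun j hj => hq j i (mem_filter.1 hj).2

variable (q) in
noncomputable def frobeniusMap : Aq K n q →ₗ[K] Module.Dual K (Aq K n q) :=
  (LinearMap.mul K (Aq K n q)).flip.compr₂ (topCoord q)

lemma frobeniusMap_apply (x y : Aq K n q) : frobeniusMap q x y = topCoord q (y * x) := rfl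

lemma frobeniusMap_injective (hq : ∀ i j : Fin n, i < j → q i j ≠ 0) :
    Function.Injective (frobeniusMap q) := by
  rw [← LinearMap.ker_eq_bot, LinearMap.ker_eq_bot']
  intro x hx
  refine (monomialBasis q).ext_elem fun S => ?_
  rw [map_zero, Finsupp.zero_apply]
  have hpair : topCoord q ∘ₗ LinearMap.mulLeft K (monomial q Sᶜ) =
      (∏ i ∈ Sᶜ, qFactor q S i) • (monomialBasis q).coord S := by
    refine (monomialBasis q).ext fun T => ?_
    rw [LinearMap.smul_apply, Module.Basis.coord_apply, Module.Basis.repr_self,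
      LinearMap.comp_apply, LinearMap.mulLeft_apply, monomialBasis_apply,
      topCoord_monomial_mul_monomial]
    by_cases hT : T = S
    · simp [hT, isCompl_compl.symm]
    · have hST : ¬IsCompl Sᶜ T := fun h => hT (h.right_unique isCompl_compl.symm)
      simp [hST, Ne.symm hT]
  have := LinearMap.congr_fun hpair x
  rw [LinearMap.comp_apply, LinearMap.mulLeft_apply, ← frobeniusMap_apply, hx,
    LinearMap.zero_apply, LinearMap.smul_apply, smul_eq_mul, Module.Basis.coord_apply] at this
  exact (mul_eq_zero.1 this.symm).resolve_left
    (prod_ne_zero_iff.2 fun i _ => qFactor_ne_zero hq S i)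

end Aq

open Aq

theorem aqZFrobenius_natCast {K : Type} [Field K] {n : ℕ} {q : Fin n → Fin n → K}
    (hq : ∀ i j : Fin n, i < j → q i j ≠ 0) : AqZFrobenius K n q n := by
  refine ⟨LinearMap.linearEquivOfInjective _ (frobeniusMap_injective hq)
    Subspace.dual_finrank_eq.symm, fun a x y => ?_, fun d x hx h hh y hy => ?_⟩
  · simp [frobeniusMap_apply, mul_assoc]
  · rw [aqGradeZ_eq_span] at hx hy
    rw [LinearMap.linearEquivOfInjective_apply]
    refine LinearMap.apply_eq_zero_of_mem_span _ ?_ hx hy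
    rintro _ ⟨S, hS, rfl⟩ _ ⟨T, hT, rfl⟩
    refine topCoord_monomial_mul_monomial_of_card_add_ne fun hTS => hh ?_
    simp only [Set.mem_ofPred_eq] at hS hT
    omega

theorem AqZFrobenius.exists_card_eq_sub {K : Type} [Field K] {n : ℕ} {q : Fin n → Fin n → K}
    {σ : ℤ} (h : AqZFrobenius K n q σ) (S : Finset (Fin n)) :
    ∃ T : Finset (Fin n), (T.card : ℤ) = σ - S.card := by
  obtain ⟨φ, -, hφ⟩ := h
  by_contra! hT
  have hS : monomial q S ∈ AqGradeZ K n q ((S.card - σ) + σ) := by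
    simpa using monomial_mem_aqGradeZ S
  have hφS : φ (monomial q S) = 0 := (monomialBasis q).ext fun T => by
    simpa using hφ _ _ hS T.card (by have := hT T; omega) _ (monomial_mem_aqGradeZ T)
  exact (monomialBasis q).ne_zero S (by simpa using hφS)

theorem AqZFrobenius.eq_natCast {K : Type} [Field K] {n : ℕ} {q : Fin n → Fin n → K} {σ : ℤ}
    (h : AqZFrobenius K n q σ) : σ = n := by
  obtain ⟨T, hT⟩ := h.exists_card_eq_sub ∅
  obtain ⟨T', hT'⟩ := h.exists_card_eq_sub univ
  have := card_le_univ T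
  simp only [card_empty, card_univ, Fintype.card_fin, Nat.cast_zero, sub_zero] at hT hT' this
  omega

theorem stmt10_general (K : Type) [Field K] (n : ℕ)
    (q : Fin n → Fin n → K) (hq : ∀ i j : Fin n, i < j → q i j ≠ 0) :
    AqZFrobenius K n q (n : ℤ) ∧ ∀ j : ℤ, j ≠ (n : ℤ) → ¬ AqZFrobenius K n q j :=
  ⟨aqZFrobenius_natCast hq, fun _ hj h => hj h.eq_natCast⟩

/-- **Proposition C (iii).**  With its `ℤ`-grading, `A(q)` is `n`-graded Frobenius, and
it is not `j`-graded Frobenius for any integer `j ≠ n`. -/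
theorem stmt10 (K : Type) [Field K] (n : ℕ) (hn : 2 ≤ n)
    (q : Fin n → Fin n → K) (hq : ∀ i j : Fin n, i < j → q i j ≠ 0) :
    AqZFrobenius K n q (n : ℤ) ∧ ∀ j : ℤ, j ≠ (n : ℤ) → ¬ AqZFrobenius K n q j :=
  stmt10_general K n q hq
end
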